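/- If h(G) = k, then there exists a sequence of vertex identifications applied to G, where at each step the identified vertices have distance at least 3 in the current graph, whose result is a graph H with k vertices and diameter at most 2. -/

import Mathlib

/-!
Fix a harmonious colouring `c` of `G` with `h(G)` colours. Two vertices of the same colour are
at distance at least 3, and `c` descends to the graph obtained by identifying them. Conversely,
identifying two vertices `u, v` at distance at least 3 cannot lower `h`: the retraction `v ↦ u`
is injective on edges, so it pulls harmonious colourings back. Hence `h` is unchanged by the
identification and we recurse on the smaller graph. The recursion stops when the optimal
colouring is injective, i.e. when there are exactly `h(G)` vertices; then any two vertices at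
distance at least 3 could be identified, giving a graph with fewer vertices but the same `h`,
which is impossible.
-/

def IsHarmonious {V : Type*} {α : Type*} (G : SimpleGraph V) (c : V → α) : Prop :=
  (∀ ⦃u v : V⦄, G.Adj u v → c u ≠ c v) ∧
  ∀ ⦃u v x y : V⦄, G.Adj u v → G.Adj x y →
    s(c u, c v) = s(c x, c y) → s(u, v) = s(x, y)

noncomputable def hchrom {V : Type*} [Fintype V] (G : SimpleGraph V) : ℕ :=
  sInf {k | ∃ c : V → Fin k, IsHarmonious G c}

def DistAtLeastThree {V : Type*} (G : SimpleGraph V) (u v : V) : Prop :=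
  u ≠ v ∧ ¬ G.Adj u v ∧ ∀ w : V, ¬ (G.Adj u w ∧ G.Adj w v)

/-- The graph `G ∘ uv` obtained by identifying `v` with `u`: vertex `v` is
removed and `u` becomes adjacent to all former neighbors of `v`. -/
def identify {V : Type*} (G : SimpleGraph V) (u v : V) :
    SimpleGraph {x : V // x ≠ v} where
  Adj a b := a ≠ b ∧
    (G.Adj a.1 b.1 ∨ (a.1 = u ∧ G.Adj v b.1) ∨ (b.1 = u ∧ G.Adj a.1 v))
  symm := by
    constructor
    rintro a b ⟨hab, h | ⟨h1, h2⟩ | ⟨h1, h2⟩⟩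
    · exact ⟨hab.symm, Or.inl h.symm⟩
    · exact ⟨hab.symm, Or.inr (Or.inr ⟨h1, h2.symm⟩)⟩
    · exact ⟨hab.symm, Or.inr (Or.inl ⟨h1, h2.symm⟩)⟩
  loopless := ⟨fun a h => h.1 rfl⟩

/-- `SeqIdent3 G H`: `H` is obtained from `G` by a sequence of identifications,
each applied to a pair of vertices at distance at least 3 in the current graph. -/
inductive SeqIdent3 : ∀ {n m : ℕ}, SimpleGraph (Fin n) → SimpleGraph (Fin m) → Prop
  | refl {n : ℕ} (G : SimpleGraph (Fin n)) : SeqIdent3 G G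
  | step {n m : ℕ} {G : SimpleGraph (Fin (n + 1))} {G' : SimpleGraph (Fin n)}
      {H : SimpleGraph (Fin m)} (u v : Fin (n + 1))
      (hd : DistAtLeastThree G u v) (hiso : Nonempty (G' ≃g identify G u v)) :
      SeqIdent3 G' H → SeqIdent3 G H

open Function

variable {V W α β : Type*}

namespace IsHarmonious

variable {G : SimpleGraph V} {c : V → α}

theorem of_injective (G : SimpleGraph V) (hc : Injective c) : IsHarmonious G c :=
  ⟨fun _ _ h he => h.ne (hc he),
    fun _ _ _ _ _ _ he => Sym2.map.injective hc (by simpa only [Sym2.map_mk] using he)⟩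

theorem comp_left (hc : IsHarmonious G c) {f : α → β} (hf : Injective f) :
    IsHarmonious G (f ∘ c) :=
  ⟨fun _ _ h he => hc.1 h (hf he),
    fun _ _ _ _ h₁ h₂ he =>
      hc.2 h₁ h₂ (Sym2.map.injective hf (by simp only [Sym2.map_mk]; exact he))⟩

theorem comp_hom {G' : SimpleGraph W} (hc : IsHarmonious G c) (f : G' →g G)
    (hf : Set.InjOn (Sym2.map f) G'.edgeSet) : IsHarmonious G' (c ∘ f) :=
  ⟨fun _ _ h => hc.1 (f.map_adj h),
    fun _ _ _ _ h₁ h₂ he =>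
      hf h₁ h₂ (by simpa only [Sym2.map_mk] using hc.2 (f.map_adj h₁) (f.map_adj h₂) he)⟩

theorem distAtLeastThree (hc : IsHarmonious G c) {u v : V} (huv : u ≠ v) (hcc : c u = c v) :
    DistAtLeastThree G u v := by
  refine ⟨huv, fun h => hc.1 h hcc, fun w ⟨huw, hwv⟩ => huv ?_⟩
  have : s(u, w) = s(v, w) := hc.2 huw hwv.symm (by rw [hcc])
  obtain h | ⟨h₁, h₂⟩ := Sym2.eq_iff.mp this
  exacts [h.1, h₁.trans h₂]

end IsHarmonious

section Identify

variable [DecidableEq V] {G : SimpleGraph V} {u v : V}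

def mergeVertex (u v x : V) : V := if x = v then u else x

theorem mergeVertex_ne (huv : u ≠ v) (x : V) : mergeVertex u v x ≠ v := by
  unfold mergeVertex; split_ifs with h <;> assumption

theorem mergeVertex_of_ne {x : V} (hx : x ≠ v) : mergeVertex u v x = x := if_neg hx

theorem comp_mergeVertex {c : V → α} (hcc : c u = c v) (x : V) :
    c (mergeVertex u v x) = c x := by
  unfold mergeVertex; split_ifs with h <;> simp [h, hcc]

theorem eq_or_eq_of_mergeVertex_eq {a x : V}
    (h : mergeVertex u v a = mergeVertex u v x) :
    a = x ∨ (a = v ∧ x = u) ∨ (x = v ∧ a = u) := by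
  unfold mergeVertex at h
  split_ifs at h with h1 h2 h2
  · exact Or.inl (h1.trans h2.symm)
  · exact Or.inr (Or.inl ⟨h1, h.symm⟩)
  · exact Or.inr (Or.inr ⟨h2, h⟩)
  · exact Or.inl h

theorem exists_adj_of_identify_adj {a b : {x : V // x ≠ v}} (h : (identify G u v).Adj a b) :
    ∃ p q, G.Adj p q ∧ mergeVertex u v p = a ∧ mergeVertex u v q = b := by
  obtain ⟨-, h | ⟨ha, h⟩ | ⟨hb, h⟩⟩ := h
  · exact ⟨a, b, h, mergeVertex_of_ne a.2, mergeVertex_of_ne b.2⟩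
  · exact ⟨v, b, h, by simp [mergeVertex, ha], mergeVertex_of_ne b.2⟩
  · exact ⟨a, v, h, mergeVertex_of_ne a.2, by simp [mergeVertex, hb]⟩

def identifyHom (huv : u ≠ v) (hnadj : ¬G.Adj u v) : G →g identify G u v where
  toFun x := ⟨mergeVertex u v x, mergeVertex_ne huv x⟩
  map_rel' {a b} hab := by
    by_cases ha : a = v <;> by_cases hb : b = v <;> subst_vars <;>
      simp_all [identify, mergeVertex, hab.ne] <;> rintro rfl <;> simp_all [G.adj_comm]

/-- Two distinct edges with the same image would have to contain the edge `uv` or a path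
`u - w - v`. -/
theorem DistAtLeastThree.eq_of_mergeVertex_eq (hd : DistAtLeastThree G u v) {a b x y : V}
    (hab : G.Adj a b) (hxy : G.Adj x y) (h₁ : mergeVertex u v a = mergeVertex u v x)
    (h₂ : mergeVertex u v b = mergeVertex u v y) : a = x ∧ b = y := by
  obtain ⟨huv, hnadj, hcommon⟩ := hd
  rcases eq_or_eq_of_mergeVertex_eq h₁ with g1 | ⟨g1, g1'⟩ | ⟨g1, g1'⟩ <;>
    rcases eq_or_eq_of_mergeVertex_eq h₂ with g2 | ⟨g2, g2'⟩ | ⟨g2, g2'⟩ <;> subst_vars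
  · exact ⟨rfl, rfl⟩
  · exact absurd ⟨hxy.symm, hab⟩ (hcommon x)
  · exact absurd ⟨hab.symm, hxy⟩ (hcommon x)
  · exact absurd ⟨hxy, hab.symm⟩ (hcommon y)
  · exact absurd rfl hab.ne
  · exact absurd hab.symm hnadj
  · exact absurd ⟨hab, hxy.symm⟩ (hcommon y)
  · exact absurd hab hnadj
  · exact absurd rfl hxy.ne

theorem DistAtLeastThree.injOn_identifyHom (hd : DistAtLeastThree G u v) :
    Set.InjOn (Sym2.map (identifyHom hd.1 hd.2.1)) G.edgeSet := by
  intro e₁ he₁ e₂ he₂ h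
  induction e₁ using Sym2.ind with | _ a b => ?_
  induction e₂ using Sym2.ind with | _ x y => ?_
  have h' := congrArg (Sym2.map Subtype.val) h
  simp only [Sym2.map_mk] at h'
  change s(mergeVertex u v a, mergeVertex u v b) = s(mergeVertex u v x, mergeVertex u v y) at h'
  obtain ⟨h₁, h₂⟩ | ⟨h₁, h₂⟩ := Sym2.eq_iff.mp h'
  · obtain ⟨rfl, rfl⟩ := hd.eq_of_mergeVertex_eq he₁ he₂ h₁ h₂
    rfl
  · obtain ⟨rfl, rfl⟩ := hd.eq_of_mergeVertex_eq he₁ (G.adj_symm he₂) h₁ h₂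
    exact Sym2.eq_swap

theorem IsHarmonious.restrict_identify {c : V → α} (hc : IsHarmonious G c) (hcc : c u = c v) :
    IsHarmonious (identify G u v) (fun a => c a.1) := by
  refine ⟨fun a b hab => ?_, fun a b x y hab hxy he => ?_⟩
  · obtain ⟨p, q, hpq, hpa, hqb⟩ := exists_adj_of_identify_adj hab
    simpa only [← hpa, ← hqb, comp_mergeVertex hcc] using hc.1 hpq
  · obtain ⟨p, q, hpq, hpa, hqb⟩ := exists_adj_of_identify_adj hab
    obtain ⟨p', q', hpq', hpx, hqy⟩ := exists_adj_of_identify_adj hxy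
    have hedge := hc.2 hpq hpq'
      (by simpa only [← hpa, ← hqb, ← hpx, ← hqy, comp_mergeVertex hcc] using he)
    apply Sym2.map.injective Subtype.val_injective
    simpa only [Sym2.map_mk, ← hpa, ← hqb, ← hpx, ← hqy, Sym2.map_map] using
      congrArg (Sym2.map (mergeVertex u v)) hedge

end Identify

section HarmoniousChromaticNumber

variable [Fintype V] {G : SimpleGraph V}

theorem hchrom_le_card_of_isHarmonious [Fintype α] {c : V → α} (hc : IsHarmonious G c) :
    hchrom G ≤ Fintype.card α :=
  Nat.sInf_le ⟨_, hc.comp_left (Fintype.equivFin α).injective⟩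

theorem hchrom_le_card (G : SimpleGraph V) : hchrom G ≤ Fintype.card V :=
  hchrom_le_card_of_isHarmonious (.of_injective G injective_id)

theorem exists_isHarmonious_hchrom (G : SimpleGraph V) :
    ∃ c : V → Fin (hchrom G), IsHarmonious G c :=
  Nat.sInf_mem (⟨_, _, .of_injective G (Fintype.equivFin V).injective⟩ :
    {k | ∃ c : V → Fin k, IsHarmonious G c}.Nonempty)

theorem SimpleGraph.Iso.hchrom_le [Fintype W] {G' : SimpleGraph W} (φ : G ≃g G') :
    hchrom G ≤ hchrom G' := by
  obtain ⟨c, hc⟩ := exists_isHarmonious_hchrom G'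
  simpa using hchrom_le_card_of_isHarmonious
    (hc.comp_hom φ.toHom (Sym2.map.injective φ.injective).injOn)

theorem SimpleGraph.Iso.hchrom_eq [Fintype W] {G' : SimpleGraph W} (φ : G ≃g G') :
    hchrom G = hchrom G' :=
  φ.hchrom_le.antisymm φ.symm.hchrom_le

theorem hchrom_eq_card_of_injective {c : V → Fin (hchrom G)} (hinj : Injective c) :
    hchrom G = Fintype.card V :=
  (hchrom_le_card G).antisymm (by simpa using Fintype.card_le_of_injective c hinj)

variable [DecidableEq V] {u v : V}

theorem DistAtLeastThree.hchrom_le (hd : DistAtLeastThree G u v) :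
    hchrom G ≤ hchrom (identify G u v) := by
  obtain ⟨c, hc⟩ := exists_isHarmonious_hchrom (identify G u v)
  simpa using hchrom_le_card_of_isHarmonious (hc.comp_hom _ hd.injOn_identifyHom)

theorem IsHarmonious.hchrom_identify {c : V → Fin (hchrom G)} (hc : IsHarmonious G c)
    (huv : u ≠ v) (hcc : c u = c v) : hchrom (identify G u v) = hchrom G :=
  le_antisymm (by simpa using hchrom_le_card_of_isHarmonious (hc.restrict_identify hcc))
    (hc.distAtLeastThree huv hcc).hchrom_le

theorem adj_or_exists_adj_adj_of_hchrom_eq_card (hG : hchrom G = Fintype.card V) (huv : u ≠ v) :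
    G.Adj u v ∨ ∃ w, G.Adj u w ∧ G.Adj w v := by
  by_contra! h
  have hd : DistAtLeastThree G u v := ⟨huv, h.1, fun w hw => h.2 w hw.1 hw.2⟩
  have hcard : Fintype.card {x // x ≠ v} = Fintype.card V - 1 := by simp
  have := hd.hchrom_le.trans (hchrom_le_card _)
  have : 0 < Fintype.card V := Fintype.card_pos_iff.mpr ⟨u⟩
  omega

end HarmoniousChromaticNumber

/-- If `h(G) = k`, some sequence of identifications of vertices at distance at
least 3 turns `G` into a graph with `k` vertices and diameter at most 2. -/
theorem stmt12 {n k : ℕ} (G : SimpleGraph (Fin n)) (h : hchrom G = k) :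
    ∃ H : SimpleGraph (Fin k), SeqIdent3 G H ∧
      ∀ u v : Fin k, u ≠ v → H.Adj u v ∨ ∃ w : Fin k, H.Adj u w ∧ H.Adj w v := by
  induction n using Nat.strong_induction_on generalizing k with
  | _ n ih =>
  obtain ⟨c, hc⟩ := exists_isHarmonious_hchrom G
  by_cases hinj : Injective c
  · obtain rfl : k = n := by simpa [h] using hchrom_eq_card_of_injective hinj
    exact ⟨G, .refl G, fun u v => adj_or_exists_adj_adj_of_hchrom_eq_card
      (hchrom_eq_card_of_injective hinj)⟩
  obtain ⟨u, v, hcc, huv⟩ := not_injective_iff.mp hinj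
  obtain ⟨m, rfl⟩ : ∃ m, n = m + 1 := Nat.exists_eq_add_one.mpr u.pos
  have hcard : Fintype.card {x // x ≠ v} = m := by simp
  let φ := (identify G u v).overFinIso hcard
  obtain ⟨H, hGH, hH⟩ :=
    ih m m.lt_add_one _ (φ.symm.hchrom_eq.trans ((hc.hchrom_identify huv hcc).trans h))
  exact ⟨H, .step u v (hc.distAtLeastThree huv hcc) ⟨φ.symm⟩ hGH, hH⟩
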